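/- arXiv:2307.13075 — 4 statements merged into one kernel-verified Lean document; each statement's English description precedes it below -/
import Mathlib

section
/- Let S be a finite set of Wang prototiles. If for every n ∈ ℕ there exists an S-tiling of the square region {0,…,n−1} × {0,…,n−1}, then there exists a total S-tiling of the plane ℤ × ℤ. -/
/-- A Wang prototile: a 4-tuple `(l, u, r, b)` of natural-number edge colours. -/
abbrev WangTile : Type := ℕ × ℕ × ℕ × ℕ

def tileLeft (t : WangTile) : ℕ := t.1
def tileUp (t : WangTile) : ℕ := t.2.1
def tileRight (t : WangTile) : ℕ := t.2.2.1
def tileBottom (t : WangTile) : ℕ := t.2.2.2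

/-- `f` is an `S`-tiling of the region `R ⊆ ℤ × ℤ`: on `R` the tiles come from `S`,
and horizontally/vertically adjacent positions inside `R` have matching edge colours. -/
def IsTiling (S : Set WangTile) (R : Set (ℤ × ℤ)) (f : ℤ × ℤ → WangTile) : Prop :=
  (∀ p ∈ R, f p ∈ S) ∧
  (∀ x y : ℤ, ((x, y) : ℤ × ℤ) ∈ R → ((x + 1, y) : ℤ × ℤ) ∈ R →
    tileRight (f (x, y)) = tileLeft (f (x + 1, y))) ∧
  (∀ x y : ℤ, ((x, y) : ℤ × ℤ) ∈ R → ((x, y + 1) : ℤ × ℤ) ∈ R →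
    tileUp (f (x, y)) = tileBottom (f (x, y + 1)))


/-!
Centre the squares of odd side at the origin, so that they exhaust the plane. Along an
ultrafilter finer than `atTop`, the tile each of these tilings puts on a given cell is
eventually constant, since `S` is finite; call it the limit tile. The limit is a total tiling,
because each matching condition involves only two cells, and some square tiling agrees with
the limit on both of them.
-/

open Filter

namespace IsTiling

variable {S : Set WangTile} {R : Set (ℤ × ℤ)} {f : ℤ × ℤ → WangTile}

theorem comp_add (hf : IsTiling S R f) (v : ℤ × ℤ) :
    IsTiling S ((· + v) ⁻¹' R) (fun p => f (p + v)) := by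
  obtain ⟨hS, hH, hV⟩ := hf
  obtain ⟨a, b⟩ := v
  refine ⟨fun p hp => hS _ hp, fun x y h₁ h₂ => ?_, fun x y h₁ h₂ => ?_⟩
  · have h₂' : ((x + a + 1, y + b) : ℤ × ℤ) ∈ R := by
      simpa only [Set.mem_preimage, Prod.mk_add_mk, add_right_comm] using h₂
    simpa only [Prod.mk_add_mk, add_right_comm] using hH _ _ h₁ h₂'
  · have h₂' : ((x + a, y + b + 1) : ℤ × ℤ) ∈ R := by
      simpa only [Set.mem_preimage, Prod.mk_add_mk, add_right_comm] using h₂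
    simpa only [Prod.mk_add_mk, add_right_comm] using hV _ _ h₁ h₂'

end IsTiling

theorem exists_isTiling_univ_of_eventually_mem {ι : Type*} {S : Set WangTile} (hS : S.Finite)
    (l : Filter ι) [l.NeBot] (R : ι → Set (ℤ × ℤ)) (g : ι → ℤ × ℤ → WangTile)
    (hg : ∀ i, IsTiling S (R i) (g i)) (hR : ∀ p, ∀ᶠ i in l, p ∈ R i) :
    ∃ f : ℤ × ℤ → WangTile, IsTiling S Set.univ f := by
  let U : Ultrafilter ι := Ultrafilter.of l
  have hRU : ∀ p, ∀ᶠ i in U, p ∈ R i := fun p => Ultrafilter.of_le l (hR p)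
  have hlim : ∀ p, ∃ s ∈ S, ∀ᶠ i in U, g i p = s := fun p =>
    (Ultrafilter.eventually_exists_mem_iff hS).mp <|
      (hRU p).mono fun i hi => ⟨g i p, (hg i).1 p hi, rfl⟩
  choose f hfS hf using hlim
  refine ⟨f, fun p _ => hfS p, fun x y _ _ => ?_, fun x y _ _ => ?_⟩
  · obtain ⟨i, h₁, h₂, hp₁, hp₂⟩ :=
      ((hf (x, y)).and <| (hf (x + 1, y)).and <| (hRU _).and (hRU _)).exists
    rw [← h₁, ← h₂]
    exact (hg i).2.1 x y hp₁ hp₂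
  · obtain ⟨i, h₁, h₂, hp₁, hp₂⟩ :=
      ((hf (x, y)).and <| (hf (x, y + 1)).and <| (hRU _).and (hRU _)).exists
    rw [← h₁, ← h₂]
    exact (hg i).2.2 x y hp₁ hp₂

/-- **Extension theorem.** If a finite set `S` of Wang prototiles tiles every
`n × n` square, then it has a total tiling of the plane. -/
theorem wang_extension_theorem (S : Finset WangTile)
    (h : ∀ n : ℕ, ∃ f : ℤ × ℤ → WangTile,
      IsTiling (↑S) {p : ℤ × ℤ | 0 ≤ p.1 ∧ p.1 < (n : ℤ) ∧ 0 ≤ p.2 ∧ p.2 < (n : ℤ)} f) :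
    ∃ f : ℤ × ℤ → WangTile, IsTiling (↑S) Set.univ f := by
  choose g hg using h
  -- the square of side `2n + 1`, translated so that it is centred at the origin
  refine exists_isTiling_univ_of_eventually_mem S.finite_toSet atTop _ _
    (fun n => (hg (2 * n + 1)).comp_add ((n : ℤ), (n : ℤ))) fun p => ?_
  filter_upwards [eventually_ge_atTop (p.1.natAbs + p.2.natAbs)] with n hn
  simp only [Set.mem_preimage, Set.mem_ofPred_eq, Prod.fst_add, Prod.snd_add]
  omega
end

section
/- TILE ≡_m ILL, that is, TILE ≤_m ILL and ILL ≤_m TILE. -/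
/-- The standard enumeration of partial computable functions `ℕ →. ℕ`. -/
def Phi (e : ℕ) : ℕ →. ℕ := (Denumerable.ofNat Nat.Partrec.Code e).eval

/-- `φ_e` is total. -/
def PhiTotal (e : ℕ) : Prop := ∀ m : ℕ, (Phi e m).Dom

/-- `φ_e` is total and `{0,1}`-valued. -/
def PhiTotalBool (e : ℕ) : Prop := ∀ m : ℕ, ∃ v : ℕ, v ∈ Phi e m ∧ (v = 0 ∨ v = 1)

/-- The set of Wang prototiles coded by `e`: tiles whose code is accepted by `φ_e`. -/
def PhiTileSet (e : ℕ) : Set WangTile := {t : WangTile | 1 ∈ Phi e (Encodable.encode t)}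

/-- The set of finite sequences coded by `e`: sequences whose code is accepted by `φ_e`. -/
def TSet (e : ℕ) : Set (List ℕ) := {σ : List ℕ | 1 ∈ Phi e (Encodable.encode σ)}

/-- A tree: a set of finite sequences closed under initial segments. -/
def IsTree (T : Set (List ℕ)) : Prop := ∀ σ ∈ T, ∀ τ : List ℕ, τ <+: σ → τ ∈ T

/-- A tree is ill-founded if it has an infinite path. -/
def IllFounded (T : Set (List ℕ)) : Prop :=
  ∃ p : ℕ → ℕ, ∀ n : ℕ, (List.range n).map p ∈ T

def TILE : Set ℕ :=
  {e | PhiTotalBool e ∧ ∃ f : ℤ × ℤ → WangTile, IsTiling (PhiTileSet e) Set.univ f}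

def ILL : Set ℕ := {e | PhiTotalBool e ∧ IsTree (TSet e) ∧ IllFounded (TSet e)}


/-!
For `TILE ≤ ILL`, list the positions of `ℤ × ℤ` along the enumeration `ofNat (ℤ × ℤ)` and
consider the tree of finite sequences of tile codes that form an `S_e`-tiling of the first `k`
positions, and such that `φ_e` is `{0,1}`-valued below `k`. Its infinite paths are the total
`S_e`-tilings read along the enumeration, and they exist only if `φ_e` is total and
`{0,1}`-valued.

For `ILL ≤ TILE`, a path `p` through `T_e` is drawn as a tiling whose tile in column `x` carries
`x` and the initial segment of `p` of length `max x 0`; its left colour carries that segment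
with its last entry removed, so matching colours force neighbouring columns to carry
consecutive initial segments, and a tiling yields a path. The same tile also tests `φ_e` at
the code `m` of its column: the value must be `0` or `1`, and if the `m`-th finite sequence lies
in `T_e`, so must its `dropLast`. The columns of any tiling run through all of `ℤ`, so this
makes `φ_e` total and `{0,1}`-valued and `T_e` a tree.

In both directions membership in the new tree or tile set is decided by a primitive recursive
test of finitely many values of `φ_e` at computable points, so its index is computable from `e`.
-/

open Encodable Denumerable Nat.Partrec

/-! ### Indices computed from `e` that query `φ_e` at finitely many points -/

open Classical in
noncomputable def phiVal (e m : ℕ) : ℕ := (Phi e m).getOrElse 0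

lemma phiVal_mem {e m : ℕ} (h : (Phi e m).Dom) : phiVal e m ∈ Phi e m := by
  classical
  rw [phiVal, Part.getOrElse_of_dom _ h]
  exact Part.get_mem h

lemma phiVal_eq_of_mem {e m v : ℕ} (h : v ∈ Phi e m) : phiVal e m = v :=
  Part.mem_unique (phiVal_mem (Part.dom_iff_mem.2 ⟨v, h⟩)) h

lemma one_mem_phi_iff {e m : ℕ} : 1 ∈ Phi e m ↔ (Phi e m).Dom ∧ phiVal e m = 1 :=
  ⟨fun h => ⟨Part.dom_iff_mem.2 ⟨1, h⟩, phiVal_eq_of_mem h⟩,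
    fun ⟨hdom, h⟩ => h ▸ phiVal_mem hdom⟩

def PhiBoolAt (e m : ℕ) : Prop := ∃ v, v ∈ Phi e m ∧ (v = 0 ∨ v = 1)

lemma phiBoolAt_iff {e m : ℕ} : PhiBoolAt e m ↔ (Phi e m).Dom ∧ phiVal e m ≤ 1 := by
  constructor
  · rintro ⟨v, hv, h01⟩
    exact ⟨Part.dom_iff_mem.2 ⟨v, hv⟩, by rw [phiVal_eq_of_mem hv]; omega⟩
  · rintro ⟨hdom, hle⟩
    exact ⟨_, phiVal_mem hdom, by omega⟩

lemma PhiTotalBool.phiTotal {e : ℕ} (h : PhiTotalBool e) : PhiTotal e := fun m =>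
  let ⟨v, hv, _⟩ := h m
  Part.dom_iff_mem.2 ⟨v, hv⟩

def phiMapRange (e : ℕ) (g : ℕ → ℕ) (k : ℕ) : Part (List ℕ) :=
  k.rec (Part.some []) fun j IH => IH.bind fun vs => (Phi e (g j)).map (vs ++ [·])

lemma mem_phiMapRange_iff {e : ℕ} {g : ℕ → ℕ} {k : ℕ} {vs : List ℕ} :
    vs ∈ phiMapRange e g k ↔
      (∀ m ∈ (List.range k).map g, (Phi e m).Dom) ∧ vs = ((List.range k).map g).map (phiVal e) := by
  induction k generalizing vs with
  | zero => simp [phiMapRange]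
  | succ k ih =>
    change vs ∈ (phiMapRange e g k).bind _ ↔ _
    simp only [Part.mem_bind_iff, Part.mem_map_iff, ih, List.range_succ, List.map_append,
      List.mem_append, List.map_singleton, List.mem_singleton]
    constructor
    · rintro ⟨_, ⟨hdom, rfl⟩, v, hv, rfl⟩
      refine ⟨fun m hm => hm.elim (hdom m) fun h => h ▸ Part.dom_iff_mem.2 ⟨v, hv⟩, ?_⟩
      simp [phiVal_eq_of_mem hv]
    · rintro ⟨hdom, rfl⟩
      exact ⟨_, ⟨fun m hm => hdom m (.inl hm), rfl⟩, _, phiVal_mem (hdom _ (.inr rfl)), rfl⟩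

lemma partrec_phiMapRange {α : Type*} [Primcodable α] {e : α → ℕ} {g : α → ℕ → ℕ} {k : α → ℕ}
    (he : Computable e) (hg : Computable₂ g) (hk : Computable k) :
    Partrec fun a => phiMapRange (e a) (g a) (k a) :=
  (Partrec.nat_rec (g := fun _ => Part.some [])
    (h := fun a p => (Phi (e a) (g a p.1)).map (p.2 ++ [·])) hk (Partrec.const' _) <|
    Partrec.map
      (Code.eval_part.comp ((Computable.ofNat Code).comp (he.comp .fst))
        (hg.comp .fst (Computable.fst.comp .snd)))
      (Computable.list_append.comp (Computable.snd.comp (Computable.snd.comp .fst))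
        (Computable.list_cons.comp .snd (.const [])))).of_eq fun _ => rfl

lemma List.map_getD_range_length {α : Type*} (L : List α) (d : α) :
    (List.range L.length).map (L.getD · d) = L := by
  apply List.ext_getElem (by simp)
  intro i hi _
  have hi' : i < L.length := by simpa using hi
  simp [hi']

theorem exists_computable_phi_map {q : ℕ → List ℕ} {out : ℕ → List ℕ → ℕ}
    (hq : Computable q) (hout : Computable₂ out) :
    ∃ r : ℕ → ℕ, Computable r ∧ ∀ e n a,
      a ∈ Phi (r e) n ↔ (∀ m ∈ q n, (Phi e m).Dom) ∧ a = out n ((q n).map (phiVal e)) := by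
  let G : ℕ →. ℕ := fun p =>
    (phiMapRange p.unpair.1 (fun j => (q p.unpair.2).getD j 0) (q p.unpair.2).length).map
      (out p.unpair.2)
  have hG : Partrec G := by
    have hn : Computable fun p : ℕ => p.unpair.2 := Computable.snd.comp .unpair
    exact Partrec.map (partrec_phiMapRange (Computable.fst.comp .unpair)
      ((Primrec.list_getD 0).to_comp.comp (hq.comp (hn.comp .fst)) .snd)
      (Computable.list_length.comp (hq.comp hn))) (hout.comp (hn.comp .fst) .snd)
  obtain ⟨c, hc⟩ := Code.exists_code.1 (Partrec.nat_iff.1 hG)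
  refine ⟨fun e => encode (c.curry e),
    Computable.encode.comp (Code.primrec₂_curry.to_comp.comp (.const c) .id), fun e n a => ?_⟩
  have hphi : Phi (encode (c.curry e)) n = G (Nat.pair e n) := by
    simp [Phi, Code.eval_curry, hc]
  simp only [hphi, G, Nat.unpair_pair, Part.mem_map_iff, mem_phiMapRange_iff,
    List.map_getD_range_length]
  constructor
  · rintro ⟨_, ⟨hdom, rfl⟩, rfl⟩
    exact ⟨hdom, rfl⟩
  · rintro ⟨hdom, rfl⟩
    exact ⟨_, ⟨hdom, rfl⟩, rfl⟩

theorem exists_computable_one_mem_phi_iff {q : ℕ → List ℕ} {P : ℕ → List ℕ → Prop}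
    (hq : Computable q) (hP : ComputablePred fun p : ℕ × List ℕ => P p.1 p.2) :
    ∃ r : ℕ → ℕ, Computable r ∧
      (∀ e n, 1 ∈ Phi (r e) n ↔ (∀ m ∈ q n, (Phi e m).Dom) ∧ P n ((q n).map (phiVal e))) ∧
      ∀ e, PhiTotal e → PhiTotalBool (r e) := by
  obtain ⟨_, hdec⟩ := hP
  obtain ⟨r, hr, hspec⟩ := exists_computable_phi_map hq
    ((Primrec.dom_bool Bool.toNat).to_comp.comp hdec).to₂
  refine ⟨r, hr, fun e n => ?_, fun e htot n => ?_⟩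
  · rw [hspec]
    by_cases h : P n ((q n).map (phiVal e)) <;> simp [h]
  · refine ⟨_, (hspec e n _).2 ⟨fun m _ => htot m, rfl⟩, ?_⟩
    by_cases h : P n ((q n).map (phiVal e)) <;> simp [h]

lemma PrimrecPred.imp {α : Type*} [Primcodable α] {p q : α → Prop} (hp : PrimrecPred p)
    (hq : PrimrecPred q) : PrimrecPred fun a => p a → q a :=
  (hp.not.or hq).of_eq fun _ => imp_iff_not_or.symm

lemma Primrec.list_dropLast {α : Type*} [Primcodable α] : Primrec (@List.dropLast α) :=
  (Primrec.list_take.comp (Primrec.nat_sub.comp Primrec.list_length (.const 1)) .id).of_eq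
    fun _ => List.dropLast_eq_take.symm

/-- `encode z` is `2 * z` for `z ≥ 0` and `-2 * z - 1` for `z < 0`; at `z = -1` the truncated
subtraction `1 - 2 = 0` gives `encode 0`. -/
lemma Int.encode_add_one (z : ℤ) :
    encode (z + 1) = if encode z % 2 = 0 then encode z + 2 else encode z - 2 := by
  rcases z with k | _ | k
  · change 2 * (k + 1) = if 2 * k % 2 = 0 then 2 * k + 2 else 2 * k - 2
    simp only [Nat.mul_mod_right, ↓reduceIte]
    ring
  · rfl
  · change 2 * k + 1 = if (2 * (k + 1) + 1) % 2 = 0 then _ else 2 * (k + 1) + 1 - 2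
    simp only [Nat.mul_add_mod_self_left, Nat.mod_succ, one_ne_zero, ↓reduceIte]
    omega

lemma Int.toNat_eq_ite_encode (z : ℤ) :
    z.toNat = if encode z % 2 = 0 then encode z / 2 else 0 := by
  rcases z with k | k
  · change k = if 2 * k % 2 = 0 then 2 * k / 2 else 0
    simp
  · change 0 = if (2 * k + 1) % 2 = 0 then _ else 0
    simp

theorem Primrec.int_add_one : Primrec fun z : ℤ => z + 1 :=
  Primrec.encode_iff.mp <| (Primrec.ite
    (Primrec.eq.comp (Primrec.nat_mod.comp Primrec.encode (.const 2)) (.const 0))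
    (Primrec.nat_add.comp Primrec.encode (.const 2))
    (Primrec.nat_sub.comp Primrec.encode (.const 2))).of_eq fun z => (Int.encode_add_one z).symm

theorem Primrec.int_toNat : Primrec Int.toNat :=
  (Primrec.ite
    (Primrec.eq.comp (Primrec.nat_mod.comp Primrec.encode (.const 2)) (.const 0))
    (Primrec.nat_div.comp Primrec.encode (.const 2))
    (.const 0)).of_eq fun z => (Int.toNat_eq_ite_encode z).symm

lemma primrec_tileLeft : Primrec tileLeft := Primrec.fst
lemma primrec_tileUp : Primrec tileUp := Primrec.fst.comp Primrec.snd
lemma primrec_tileRight : Primrec tileRight := Primrec.fst.comp (Primrec.snd.comp Primrec.snd)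
lemma primrec_tileBottom : Primrec tileBottom := Primrec.snd.comp (Primrec.snd.comp Primrec.snd)

/-! ### `TILE ≤ ILL`: the tree of tilings of initial segments of `ℤ × ℤ` -/

lemma isTiling_iff {S : Set WangTile} {R : Set (ℤ × ℤ)} {f : ℤ × ℤ → WangTile} :
    IsTiling S R f ↔ ∀ z ∈ R, f z ∈ S ∧
      ((z.1 + 1, z.2) ∈ R → tileRight (f z) = tileLeft (f (z.1 + 1, z.2))) ∧
      ((z.1, z.2 + 1) ∈ R → tileUp (f z) = tileBottom (f (z.1, z.2 + 1))) := by
  simp only [IsTiling, Prod.forall, forall_and]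

lemma IsTiling.mono {S S' : Set WangTile} {R R' : Set (ℤ × ℤ)} {f : ℤ × ℤ → WangTile}
    (h : IsTiling S R f) (hS : S ⊆ S') (hR : R' ⊆ R) : IsTiling S' R' f :=
  ⟨fun z hz => hS (h.1 z (hR hz)), fun x y h₁ h₂ => h.2.1 x y (hR h₁) (hR h₂),
    fun x y h₁ h₂ => h.2.2 x y (hR h₁) (hR h₂)⟩

lemma IsTiling.congr {S : Set WangTile} {R : Set (ℤ × ℤ)} {f g : ℤ × ℤ → WangTile}
    (h : IsTiling S R f) (hfg : ∀ z ∈ R, f z = g z) : IsTiling S R g := by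
  obtain ⟨hS, hH, hV⟩ := h
  refine ⟨fun z hz => hfg z hz ▸ hS z hz, fun x y h₁ h₂ => ?_, fun x y h₁ h₂ => ?_⟩
  · rw [← hfg _ h₁, ← hfg _ h₂]; exact hH x y h₁ h₂
  · rw [← hfg _ h₁, ← hfg _ h₂]; exact hV x y h₁ h₂

def initialRegion (k : ℕ) : Set (ℤ × ℤ) := {z | encode z < k}

lemma forall_mem_initialRegion_iff {k : ℕ} {P : ℤ × ℤ → Prop} :
    (∀ z ∈ initialRegion k, P z) ↔ ∀ i < k, P (ofNat (ℤ × ℤ) i) :=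
  ⟨fun h i hi => h _ (show encode _ < k by rwa [encode_ofNat]),
    fun h z (hz : encode z < k) => ofNat_encode z ▸ h _ hz⟩

lemma isTiling_univ_of_initialRegion {S : Set WangTile} {f : ℤ × ℤ → WangTile}
    (h : ∀ k, IsTiling S (initialRegion k) f) : IsTiling S Set.univ f := by
  refine ⟨fun z _ => (h (encode z + 1)).1 z (Nat.lt_succ_self _), fun x y _ _ => ?_,
    fun x y _ _ => ?_⟩
  · exact (h (encode (x, y) + encode (x + 1, y) + 1)).2.1 x y
      (show encode _ < _ by omega) (show encode _ < _ by omega)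
  · exact (h (encode (x, y) + encode (x, y + 1) + 1)).2.2 x y
      (show encode _ < _ by omega) (show encode _ < _ by omega)

def decodeTiling (σ : List ℕ) (z : ℤ × ℤ) : WangTile := ofNat WangTile (σ.getD (encode z) 0)

lemma decodeTiling_ofNat (σ : List ℕ) (i : ℕ) :
    decodeTiling σ (ofNat (ℤ × ℤ) i) = ofNat WangTile (σ.getD i 0) := by
  rw [decodeTiling, encode_ofNat]

lemma decodeTiling_of_prefix {σ τ : List ℕ} (hτ : τ <+: σ) {z : ℤ × ℤ}
    (hz : z ∈ initialRegion τ.length) : decodeTiling τ z = decodeTiling σ z := by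
  obtain ⟨ρ, rfl⟩ := hτ
  rw [decodeTiling, decodeTiling, List.getD_append _ _ _ _ hz]

lemma decodeTiling_map_range {p : ℕ → ℕ} {k : ℕ} {z : ℤ × ℤ} (hz : z ∈ initialRegion k) :
    decodeTiling ((List.range k).map p) z = ofNat WangTile (p (encode z)) := by
  rw [decodeTiling, List.getD_eq_getElem _ _ (by simpa using (show encode z < k from hz))]
  simp

def tilingTree (e : ℕ) : Set (List ℕ) :=
  {σ | (∀ m < σ.length, PhiBoolAt e m) ∧
    IsTiling (PhiTileSet e) (initialRegion σ.length) (decodeTiling σ)}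

lemma isTree_tilingTree (e : ℕ) : IsTree (tilingTree e) := by
  rintro σ ⟨hbool, htiling⟩ τ hτ
  have hlen := hτ.length_le
  refine ⟨fun m hm => hbool m (by omega), ?_⟩
  refine (htiling.mono subset_rfl fun z (hz : encode z < _) => ?_).congr
    fun z hz => (decodeTiling_of_prefix hτ hz).symm
  exact show encode z < σ.length by omega

lemma illFounded_tilingTree_iff {e : ℕ} : IllFounded (tilingTree e) ↔ e ∈ TILE := by
  constructor
  · rintro ⟨p, hp⟩
    refine ⟨fun m => (hp (m + 1)).1 m (by simp), fun z => ofNat WangTile (p (encode z)),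
      isTiling_univ_of_initialRegion fun k => ?_⟩
    have := (hp k).2
    rw [List.length_map, List.length_range] at this
    exact this.congr fun z hz => decodeTiling_map_range hz
  · rintro ⟨hbool, f, hf⟩
    refine ⟨fun i => encode (f (ofNat (ℤ × ℤ) i)), fun k => ⟨fun m _ => hbool m, ?_⟩⟩
    rw [List.length_map, List.length_range]
    refine (hf.mono subset_rfl (Set.subset_univ _)).congr fun z hz => ?_
    rw [decodeTiling_map_range hz, ofNat_encode, ofNat_encode]

def MatchesAt (σ : List ℕ) (z : ℤ × ℤ) : Prop :=
  (encode (z.1 + 1, z.2) < σ.length →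
    tileRight (decodeTiling σ z) = tileLeft (decodeTiling σ (z.1 + 1, z.2))) ∧
  (encode (z.1, z.2 + 1) < σ.length →
    tileUp (decodeTiling σ z) = tileBottom (decodeTiling σ (z.1, z.2 + 1)))

lemma mem_tilingTree_iff {e : ℕ} {σ : List ℕ} :
    σ ∈ tilingTree e ↔ ∀ i < σ.length,
      PhiBoolAt e i ∧ 1 ∈ Phi e (σ.getD i 0) ∧ MatchesAt σ (ofNat (ℤ × ℤ) i) := by
  simp only [tilingTree, Set.mem_ofPred_eq, isTiling_iff, forall_mem_initialRegion_iff,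
    ← forall_and]
  refine forall₂_congr fun i _ => and_congr_right' (and_congr_left' ?_)
  change 1 ∈ Phi e (encode _) ↔ _
  rw [decodeTiling_ofNat, encode_ofNat]

def tilingTreeQueries (σ : List ℕ) : List ℕ := List.range σ.length ++ σ

def TilingTreeCheck (σ vs : List ℕ) : Prop :=
  ∀ i < σ.length, vs.getD i 0 ≤ 1 ∧ vs.getD (σ.length + i) 0 = 1 ∧ MatchesAt σ (ofNat (ℤ × ℤ) i)

lemma forall_mem_tilingTreeQueries_iff {σ : List ℕ} {P : ℕ → Prop} :
    (∀ m ∈ tilingTreeQueries σ, P m) ↔ ∀ i < σ.length, P i ∧ P (σ.getD i 0) := by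
  rw [tilingTreeQueries, List.forall_mem_append, forall₂_and]
  refine and_congr (by simp) ?_
  conv_lhs => rw [← List.map_getD_range_length σ 0]
  simp

lemma tilingTreeCheck_map_iff {σ : List ℕ} {f : ℕ → ℕ} :
    TilingTreeCheck σ ((tilingTreeQueries σ).map f) ↔
      ∀ i < σ.length, f i ≤ 1 ∧ f (σ.getD i 0) = 1 ∧ MatchesAt σ (ofNat (ℤ × ℤ) i) := by
  refine forall₂_congr fun i hi => ?_
  rw [tilingTreeQueries, List.map_append, List.getD_append _ _ _ _ (by simpa using hi),
    List.getD_append_right _ _ _ _ (by simp), List.getD_eq_getElem _ _ (by simpa using hi)]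
  simp [List.getD_eq_getElem?_getD, hi]

lemma primrec₂_decodeTiling : Primrec₂ decodeTiling :=
  (Primrec.ofNat WangTile).comp ((Primrec.list_getD 0).comp .fst (Primrec.encode.comp .snd))

lemma primrecRel_matchesAt : PrimrecRel MatchesAt := by
  have hright : Primrec fun p : List ℕ × (ℤ × ℤ) => (p.2.1 + 1, p.2.2) :=
    (Primrec.int_add_one.comp (Primrec.fst.comp .snd)).pair (Primrec.snd.comp .snd)
  have hup : Primrec fun p : List ℕ × (ℤ × ℤ) => (p.2.1, p.2.2 + 1) :=
    (Primrec.fst.comp .snd).pair (Primrec.int_add_one.comp (Primrec.snd.comp .snd))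
  have htile : Primrec fun p : List ℕ × (ℤ × ℤ) => decodeTiling p.1 p.2 :=
    primrec₂_decodeTiling.comp .fst .snd
  have hlen : Primrec fun p : List ℕ × (ℤ × ℤ) => p.1.length := Primrec.list_length.comp .fst
  exact PrimrecPred.and
    (PrimrecPred.imp (Primrec.nat_lt.comp (Primrec.encode.comp hright) hlen)
      (Primrec.eq.comp (primrec_tileRight.comp htile)
        (primrec_tileLeft.comp (primrec₂_decodeTiling.comp .fst hright))))
    (PrimrecPred.imp (Primrec.nat_lt.comp (Primrec.encode.comp hup) hlen)
      (Primrec.eq.comp (primrec_tileUp.comp htile)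
        (primrec_tileBottom.comp (primrec₂_decodeTiling.comp .fst hup))))

lemma primrecRel_tilingTreeCheck : PrimrecRel TilingTreeCheck := by
  have hR : PrimrecRel fun (i : ℕ) (p : List ℕ × List ℕ) => p.2.getD i 0 ≤ 1 ∧
      p.2.getD (p.1.length + i) 0 = 1 ∧ MatchesAt p.1 (ofNat (ℤ × ℤ) i) :=
    PrimrecPred.and
      (Primrec.nat_le.comp ((Primrec.list_getD 0).comp (Primrec.snd.comp .snd) .fst) (.const 1))
      (PrimrecPred.and
        (Primrec.eq.comp ((Primrec.list_getD 0).comp (Primrec.snd.comp .snd)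
          (Primrec.nat_add.comp (Primrec.list_length.comp (Primrec.fst.comp .snd)) .fst))
          (.const 1))
        (primrecRel_matchesAt.comp (Primrec.fst.comp .snd) ((Primrec.ofNat _).comp .fst)))
  exact (hR.forall_mem_list.comp (Primrec.list_range.comp (Primrec.list_length.comp .fst))
    .id).of_eq fun _ => by simp [TilingTreeCheck]

theorem exists_computable_tSet_eq_tilingTree :
    ∃ r : ℕ → ℕ, Computable r ∧ (∀ e, TSet (r e) = tilingTree e) ∧
      ∀ e, PhiTotal e → PhiTotalBool (r e) := by
  have hq : Primrec fun n => tilingTreeQueries (ofNat (List ℕ) n) :=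
    Primrec.list_append.comp (Primrec.list_range.comp (Primrec.list_length.comp (.ofNat _)))
      (.ofNat _)
  obtain ⟨r, hr, hone, htot⟩ := exists_computable_one_mem_phi_iff
    (P := fun n => TilingTreeCheck (ofNat (List ℕ) n)) hq.to_comp
    (primrecRel_tilingTreeCheck.comp (Primrec.ofNat _ |>.comp .fst) .snd).computablePred
  refine ⟨r, hr, fun e => Set.ext fun σ => ?_, htot⟩
  have h := hone e (encode σ)
  rw [ofNat_encode] at h
  rw [TSet, Set.mem_ofPred_eq, h, mem_tilingTree_iff, forall_mem_tilingTreeQueries_iff,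
    tilingTreeCheck_map_iff, ← forall₂_and]
  refine forall₂_congr fun i _ => ?_
  rw [phiBoolAt_iff, one_mem_phi_iff]
  tauto

/-! ### `ILL ≤ TILE`: tilings that draw a path -/

lemma isTree_iff_dropLast_mem {T : Set (List ℕ)} : IsTree T ↔ ∀ σ ∈ T, σ.dropLast ∈ T := by
  refine ⟨fun h σ hσ => h σ hσ _ (List.dropLast_prefix σ), fun h σ => ?_⟩
  induction σ using List.reverseRecOn with
  | nil => exact fun hσ τ hτ => List.prefix_nil.1 hτ ▸ hσ
  | append_singleton σ a ih =>
    intro hσ τ hτ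
    rcases List.prefix_concat_iff.1 hτ with rfl | hτ
    · exact hσ
    · exact ih (List.dropLast_concat (l₁ := σ) (b := a) ▸ h _ hσ) τ hτ

lemma ofNat_mem_tSet_iff {e m : ℕ} : ofNat (List ℕ) m ∈ TSet e ↔ 1 ∈ Phi e m := by
  rw [TSet, Set.mem_ofPred_eq, encode_ofNat]

def TreeLikeAt (e m : ℕ) : Prop :=
  PhiBoolAt e m ∧ (ofNat (List ℕ) m ∈ TSet e → (ofNat (List ℕ) m).dropLast ∈ TSet e)

lemma mem_ILL_iff {e : ℕ} : e ∈ ILL ↔ (∀ m, TreeLikeAt e m) ∧ IllFounded (TSet e) := by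
  have htree : (∀ m, ofNat (List ℕ) m ∈ TSet e → (ofNat (List ℕ) m).dropLast ∈ TSet e) ↔
      IsTree (TSet e) :=
    (⟨fun h σ => ofNat_encode σ ▸ h (encode σ), fun h m => h (ofNat (List ℕ) m)⟩ :
      _ ↔ ∀ σ ∈ TSet e, σ.dropLast ∈ TSet e).trans isTree_iff_dropLast_mem.symm
  rw [ILL, Set.mem_ofPred_eq, ← htree, ← and_assoc]
  exact and_congr_left' forall_and.symm

lemma exists_path_of_dropLast {α : Type*} [Inhabited α] {σ : ℕ → List α}
    (hlen : ∀ j, (σ j).length = j) (hσ : ∀ j, (σ (j + 1)).dropLast = σ j) :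
    ∃ p : ℕ → α, ∀ j, (List.range j).map p = σ j := by
  refine ⟨fun j => (σ (j + 1)).getD j default, fun j => ?_⟩
  induction j with
  | zero => exact (List.length_eq_zero_iff.1 (hlen 0)).symm
  | succ j ih =>
    rw [List.range_succ, List.map_append, ih, List.map_singleton, ← hσ j]
    refine List.dropLast_append_getLast? _ ?_
    rw [List.getLast?_eq_getElem?, hlen, Nat.add_sub_cancel, List.getD_eq_getElem?_getD,
      List.getElem?_eq_getElem (by rw [hlen]; omega)]
    rfl

lemma Int.eq_add_of_map_add_one {g : ℤ → ℤ} (h : ∀ k, g (k + 1) = g k + 1) (k : ℤ) :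
    g k = g 0 + k := by
  induction k using Int.induction_on with
  | zero => simp
  | succ k ih => rw [h, ih]; ring
  | pred k ih =>
    have := h (-k - 1)
    rw [sub_add_cancel] at this
    omega

/-- Matching the right colour of `pathTile x s` with the left colour of `pathTile x' s'` forces
`x' = x + 1` and `s = s'.dropLast`; the up and bottom colours agree, so columns are constant. -/
def pathTile (x : ℤ) (s : List ℕ) : WangTile :=
  (encode (x, s.dropLast), encode (x, s), encode (x + 1, s), encode (x, s))

def pathTileSet (e : ℕ) : Set WangTile :=
  {t | ∃ x s, t = pathTile x s ∧ s.length = x.toNat ∧ s ∈ TSet e ∧ TreeLikeAt e (encode x)}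

lemma dropLast_map_range_toNat_add_one {α : Type*} (p : ℕ → α) (x : ℤ) :
    ((List.range (x + 1).toNat).map p).dropLast = (List.range x.toNat).map p := by
  rcases le_or_gt 0 x with hx | hx
  · rw [show (x + 1).toNat = x.toNat + 1 by omega, List.range_succ, List.map_append,
      List.map_singleton, List.dropLast_concat]
  · rw [show (x + 1).toNat = 0 by omega, show x.toNat = 0 by omega]
    rfl

lemma exists_tiling_pathTileSet_iff {e : ℕ} :
    (∃ f, IsTiling (pathTileSet e) Set.univ f) ↔ e ∈ ILL := by
  rw [mem_ILL_iff]
  constructor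
  · rintro ⟨f, hS, hH, -⟩
    choose X s hfX hlen hsT htree using fun k : ℤ => hS (k, 0) trivial
    have hstep : ∀ k, X (k + 1) = X k + 1 ∧ s k = (s (k + 1)).dropLast := by
      intro k
      have := hH k 0 trivial trivial
      rw [hfX, hfX] at this
      exact (Prod.ext_iff.1 (encode_injective this)).imp Eq.symm id
    have hX := Int.eq_add_of_map_add_one fun k => (hstep k).1
    refine ⟨fun m => ?_, ?_⟩
    · have := htree (ofNat ℤ m - X 0)
      rwa [hX, add_sub_cancel, encode_ofNat] at this
    · obtain ⟨p, hp⟩ := exists_path_of_dropLast (σ := fun j => s (j - X 0))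
        (fun j => by rw [hlen, hX, add_sub_cancel, Int.toNat_natCast])
        (fun j => by
          rw [(hstep (j - X 0)).2, show ((j + 1 : ℕ) : ℤ) - X 0 = j - X 0 + 1 by push_cast; ring])
      exact ⟨p, fun j => hp j ▸ hsT _⟩
  · rintro ⟨htree, p, hp⟩
    refine ⟨fun z => pathTile z.1 ((List.range z.1.toNat).map p),
      fun z _ => ⟨z.1, _, rfl, by simp, hp _, htree _⟩, fun x y _ _ => ?_, fun _ _ _ _ => rfl⟩
    change encode (x + 1, _) = encode (x + 1, List.dropLast _)
    rw [dropLast_map_range_toNat_add_one]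

def pathTileData (t : WangTile) : ℤ × List ℕ := ofNat (ℤ × List ℕ) (tileBottom t)

lemma mem_pathTileSet_iff {e : ℕ} {t : WangTile} : t ∈ pathTileSet e ↔
    t = pathTile (pathTileData t).1 (pathTileData t).2 ∧
      (pathTileData t).2.length = (pathTileData t).1.toNat ∧ (pathTileData t).2 ∈ TSet e ∧
      TreeLikeAt e (encode (pathTileData t).1) := by
  constructor
  · rintro ⟨x, s, rfl, h⟩
    have : pathTileData (pathTile x s) = (x, s) := ofNat_encode _
    rw [this]
    exact ⟨rfl, h⟩
  · exact fun h => ⟨_, _, h⟩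

def pathTileQueries (t : WangTile) : List ℕ :=
  [encode (pathTileData t).2, encode (pathTileData t).1,
    encode (ofNat (List ℕ) (encode (pathTileData t).1)).dropLast]

def PathTileCheck (t : WangTile) (vs : List ℕ) : Prop :=
  t = pathTile (pathTileData t).1 (pathTileData t).2 ∧
    (pathTileData t).2.length = (pathTileData t).1.toNat ∧
    vs.getD 0 0 = 1 ∧ vs.getD 1 0 ≤ 1 ∧ (vs.getD 1 0 = 1 → vs.getD 2 0 = 1)

lemma primrec₂_pathTile : Primrec₂ pathTile :=
  Primrec.pair (Primrec.encode.comp (Primrec.fst.pair (Primrec.list_dropLast.comp .snd)))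
    (Primrec.pair (Primrec.encode.comp .id)
      (Primrec.pair (Primrec.encode.comp ((Primrec.int_add_one.comp .fst).pair .snd))
        (Primrec.encode.comp .id)))

lemma primrec_pathTileData : Primrec pathTileData := (Primrec.ofNat _).comp primrec_tileBottom

lemma primrec_pathTileQueries : Primrec pathTileQueries :=
  Primrec.list_cons.comp (Primrec.encode.comp (Primrec.snd.comp primrec_pathTileData))
    (Primrec.list_cons.comp (Primrec.encode.comp (Primrec.fst.comp primrec_pathTileData))
      (Primrec.list_cons.comp (Primrec.encode.comp (Primrec.list_dropLast.comp
        ((Primrec.ofNat _).comp (Primrec.encode.comp (Primrec.fst.comp primrec_pathTileData)))))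
        (.const [])))

lemma primrecRel_pathTileCheck : PrimrecRel PathTileCheck := by
  have hd : Primrec fun p : WangTile × List ℕ => pathTileData p.1 := primrec_pathTileData.comp .fst
  have hv : ∀ i, Primrec fun p : WangTile × List ℕ => p.2.getD i 0 :=
    fun i => (Primrec.list_getD 0).comp .snd (.const i)
  exact PrimrecPred.and
    (Primrec.eq.comp .fst (primrec₂_pathTile.comp (Primrec.fst.comp hd) (Primrec.snd.comp hd)))
    (PrimrecPred.and
      (Primrec.eq.comp (Primrec.list_length.comp (Primrec.snd.comp hd))
        (Primrec.int_toNat.comp (Primrec.fst.comp hd)))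
      (PrimrecPred.and (Primrec.eq.comp (hv 0) (.const 1))
        (PrimrecPred.and (Primrec.nat_le.comp (hv 1) (.const 1))
          (PrimrecPred.imp (Primrec.eq.comp (hv 1) (.const 1))
            (Primrec.eq.comp (hv 2) (.const 1))))))

/-- Only `⊆` holds in general: the check queries `φ_e` at the code of
`(ofNat (List ℕ) m).dropLast` even when the `m`-th sequence is not in `T_e`. -/
theorem exists_computable_phiTileSet_pathTileSet :
    ∃ r : ℕ → ℕ, Computable r ∧ (∀ e, PhiTileSet (r e) ⊆ pathTileSet e) ∧
      ∀ e, PhiTotal e → pathTileSet e ⊆ PhiTileSet (r e) ∧ PhiTotalBool (r e) := by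
  obtain ⟨r, hr, hone, htot⟩ := exists_computable_one_mem_phi_iff
    (P := fun n => PathTileCheck (ofNat WangTile n))
    (primrec_pathTileQueries.comp (.ofNat WangTile)).to_comp
    (primrecRel_pathTileCheck.comp (Primrec.ofNat _ |>.comp .fst) .snd).computablePred
  have key : ∀ e t, t ∈ PhiTileSet (r e) ↔
      (∀ m ∈ pathTileQueries t, (Phi e m).Dom) ∧
        PathTileCheck t ((pathTileQueries t).map (phiVal e)) := fun e t => by
    have := hone e (encode t)
    rwa [ofNat_encode] at this
  refine ⟨r, hr, fun e t ht => ?_, fun e he => ⟨fun t ht => ?_, htot e he⟩⟩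
  · obtain ⟨hdom, heq, hlen, hs, hm, hdl⟩ := (key e t).1 ht
    simp only [pathTileQueries, List.forall_mem_cons, List.not_mem_nil] at hdom
    refine mem_pathTileSet_iff.2 ⟨heq, hlen, one_mem_phi_iff.2 ⟨hdom.1, hs⟩,
      phiBoolAt_iff.2 ⟨hdom.2.1, hm⟩, fun hT => one_mem_phi_iff.2 ⟨hdom.2.2.1, hdl ?_⟩⟩
    exact phiVal_eq_of_mem (ofNat_mem_tSet_iff.1 hT)
  · obtain ⟨heq, hlen, hs, hm, hdl⟩ := mem_pathTileSet_iff.1 ht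
    refine (key e t).2 ⟨fun m _ => he m, heq, hlen, phiVal_eq_of_mem hs,
      (phiBoolAt_iff.1 hm).2, fun h1 => phiVal_eq_of_mem (hdl ?_)⟩
    exact ofNat_mem_tSet_iff.2 (h1 ▸ phiVal_mem (he _))

/-- `TILE ≡_m ILL`. -/
theorem TILE_manyOneEquiv_ILL :
    (· ∈ TILE) ≤₀ (· ∈ ILL) ∧ (· ∈ ILL) ≤₀ (· ∈ TILE) := by
  constructor
  · obtain ⟨r, hr, hT, htot⟩ := exists_computable_tSet_eq_tilingTree
    refine ⟨r, hr, fun e => ⟨fun he => ?_, fun he => ?_⟩⟩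
    · exact ⟨htot e he.1.phiTotal, hT e ▸ isTree_tilingTree e,
        hT e ▸ illFounded_tilingTree_iff.2 he⟩
    · exact illFounded_tilingTree_iff.1 (hT e ▸ he.2.2)
  · obtain ⟨r, hr, hsub, hsup⟩ := exists_computable_phiTileSet_pathTileSet
    refine ⟨r, hr, fun e => ⟨fun he => ?_, fun ⟨_, f, hf⟩ => ?_⟩⟩
    · obtain ⟨hsup, hbool⟩ := hsup e he.1.phiTotal
      obtain ⟨f, hf⟩ := exists_tiling_pathTileSet_iff.2 he
      exact ⟨hbool, f, hf.mono hsup subset_rfl⟩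
    · exact exists_tiling_pathTileSet_iff.1 ⟨f, hf.mono (hsub e) subset_rfl⟩
end

section
/- If X ⊆ ℕ has the form X = A ∩ B, where A ⊆ ℕ is Σ¹₁ and B ⊆ ℕ is Π¹₁, then X ≤_m ATile. -/
/-- A total tiling is periodic if it is invariant under some nonzero translation. -/
def IsPeriodic (f : ℤ × ℤ → WangTile) : Prop :=
  ∃ v : ℤ × ℤ, v ≠ 0 ∧ ∀ p : ℤ × ℤ, f (p + v) = f p

/-- `X ⊆ ℕ` is `Σ¹₁`. -/
def Sigma11 (X : Set ℕ) : Prop :=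
  ∃ R : ℕ × List ℕ → Bool, Computable R ∧
    ∀ n : ℕ, n ∈ X ↔ ∃ f : ℕ → ℕ, ∀ k : ℕ, R (n, (List.range k).map f) = true

/-- `X ⊆ ℕ` is `Π¹₁`. -/
def Pi11 (X : Set ℕ) : Prop :=
  ∃ R : ℕ × List ℕ → Bool, Computable R ∧
    ∀ n : ℕ, n ∈ X ↔ ∀ f : ℕ → ℕ, ∃ k : ℕ, R (n, (List.range k).map f) = true

def ATile : Set ℕ :=
  {e | PhiTotalBool e ∧ (∃ f : ℤ × ℤ → WangTile, IsTiling (PhiTileSet e) Set.univ f) ∧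
    ∀ f : ℤ × ℤ → WangTile, IsTiling (PhiTileSet e) Set.univ f → ¬ IsPeriodic f}


namespace IsTiling

variable {S : Set WangTile} {f : ℤ × ℤ → WangTile}

lemma apply_mem (hf : IsTiling S Set.univ f) (p : ℤ × ℤ) : f p ∈ S :=
  hf.1 p trivial

lemma right_eq_left (hf : IsTiling S Set.univ f) (x y : ℤ) :
    tileRight (f (x, y)) = tileLeft (f (x + 1, y)) :=
  hf.2.1 x y trivial trivial

lemma up_eq_bottom (hf : IsTiling S Set.univ f) (x y : ℤ) :
    tileUp (f (x, y)) = tileBottom (f (x, y + 1)) :=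
  hf.2.2 x y trivial trivial

end IsTiling

lemma Int.forall_of_iff_add_one {P : ℤ → Prop} (h : ∀ y, P y ↔ P (y + 1)) {y₀ : ℤ} (h₀ : P y₀)
    (y : ℤ) : P y :=
  y.inductionOn' y₀ h₀ (fun k _ hk => (h k).1 hk) fun k _ hk => (h (k - 1)).2 (by simpa using hk)

lemma Int.eq_add_of_add_one {u : ℤ → ℤ} (h : ∀ y, u (y + 1) = u y + 1) (y : ℤ) :
    u y = u 0 + y :=
  Int.forall_of_iff_add_one (P := fun y => u y = u 0 + y) (fun y => by rw [h]; omega)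
    (add_zero _).symm y

namespace ATileReduction

open Encodable Denumerable

/- Horizontal colours `hcol c σ` carry a tag `c` (`2` on the path arm to the right of the origin,
`0` on a free left arm, `1` on a witness left arm) and the finite sequence `σ` read so far.
Vertical colours are `none` on the arms; on the origin column they are counters `(m, n)`,
standing for the integer `m - n`. -/
def hcol (c : ℕ) (σ : List ℕ) : ℕ := encode (c, σ)

def vcol (z : Option (ℕ × ℕ)) : ℕ := encode z

@[simp] lemma hcol_inj {c c' : ℕ} {σ σ' : List ℕ} : hcol c σ = hcol c' σ' ↔ c = c' ∧ σ = σ' := by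
  simp [hcol]

@[simp] lemma vcol_inj {z z' : Option (ℕ × ℕ)} : vcol z = vcol z' ↔ z = z' := by
  simp [vcol]

inductive Shape : WangTile → Prop
  | path (σ : List ℕ) (m : ℕ) : Shape (hcol 2 σ, vcol none, hcol 2 (σ ++ [m]), vcol none)
  | arm (c : ℕ) (hc : c ≤ 1) (σ : List ℕ) (m : ℕ) :
      Shape (hcol c (σ ++ [m]), vcol none, hcol c σ, vcol none)
  | origin (p q : ℕ × ℕ) (h : q.1 + p.2 = p.1 + q.2 + 1) :
      Shape (hcol 0 [], vcol (some q), hcol 2 [], vcol (some p))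
  | reset (p q : ℕ × ℕ) : Shape (hcol 1 [], vcol (some q), hcol 2 [], vcol (some p))

def tileSet (a b : List ℕ → Bool) : Set WangTile :=
  {t | Shape t ∧ (∀ σ, tileRight t = hcol 2 σ → a σ = true) ∧
    ∀ σ, tileLeft t = hcol 1 σ → b σ = false}

/-- The position of a horizontal colour along its row, relative to the origin. -/
def hpot (n : ℕ) : ℤ :=
  if (ofNat (ℕ × List ℕ) n).1 = 2 then (ofNat (ℕ × List ℕ) n).2.length + 1
  else -(ofNat (ℕ × List ℕ) n).2.length

def vrank (n : ℕ) : ℤ := ((ofNat (Option (ℕ × ℕ)) n).map fun p => (p.1 : ℤ) - p.2).getD 0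

def IsOrigin (t : WangTile) : Prop := hpot (tileLeft t) = 0

@[simp] lemma hpot_hcol (c : ℕ) (σ : List ℕ) :
    hpot (hcol c σ) = if c = 2 then (σ.length : ℤ) + 1 else -σ.length := by
  simp [hpot, hcol, ofNat_encode]

@[simp] lemma vrank_vcol_some (p : ℕ × ℕ) : vrank (vcol (some p)) = (p.1 : ℤ) - p.2 := by
  rw [vrank, vcol, ofNat_encode]
  rfl

namespace Shape

variable {t : WangTile}

lemma hpot_right (h : Shape t) : hpot (tileRight t) = hpot (tileLeft t) + 1 := by
  cases h <;> simp_all [tileLeft, tileRight]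
  omega

lemma isOrigin_iff_bottom (h : Shape t) : IsOrigin t ↔ ∃ p, tileBottom t = vcol (some p) := by
  cases h <;> simp [IsOrigin, tileLeft, tileBottom] <;> omega

lemma isOrigin_iff_up (h : Shape t) : IsOrigin t ↔ ∃ q, tileUp t = vcol (some q) := by
  cases h <;> simp [IsOrigin, tileLeft, tileUp] <;> omega

lemma right_of_isOrigin (h : Shape t) (h0 : IsOrigin t) : tileRight t = hcol 2 [] := by
  cases h <;> simp_all [IsOrigin, tileLeft, tileRight] <;> omega

lemma normal_or_reset_of_isOrigin (h : Shape t) (h0 : IsOrigin t) :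
    vrank (tileUp t) = vrank (tileBottom t) + 1 ∨ tileLeft t = hcol 1 [] := by
  cases h with
  | path σ m => simp [IsOrigin, tileLeft] at h0; omega
  | arm c hc σ m => simp [IsOrigin, tileLeft] at h0; omega
  | origin p q h => left; simp [tileUp, tileBottom]; omega
  | reset p q => simp [tileLeft]

lemma exists_right_of_left_path {σ : List ℕ} (h : Shape t) (hl : tileLeft t = hcol 2 σ) :
    ∃ m, tileRight t = hcol 2 (σ ++ [m]) := by
  cases h <;> simp_all [tileLeft, tileRight]

lemma exists_left_of_right_witness {σ : List ℕ} (h : Shape t) (hr : tileRight t = hcol 1 σ) :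
    ∃ m, tileLeft t = hcol 1 (σ ++ [m]) := by
  cases h <;> simp_all [tileLeft, tileRight]

end Shape

def pref (p : ℕ → ℕ) (k : ℕ) : List ℕ := (List.range k).map p

lemma pref_succ (p : ℕ → ℕ) (k : ℕ) : pref p (k + 1) = pref p k ++ [p k] := by
  simp [pref, List.range_succ]

lemma exists_pref_of_chain {c : ℕ} {P : List ℕ → Prop} {h : ℕ → ℕ} (h₀ : h 0 = hcol c [])
    (hP₀ : P []) (step : ∀ k σ, h k = hcol c σ → ∃ m, h (k + 1) = hcol c (σ ++ [m]) ∧ P (σ ++ [m])) :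
    ∃ p : ℕ → ℕ, ∀ k, P (pref p k) := by
  let p k := (ofNat (ℕ × List ℕ) (h (k + 1))).2.getLastD 0
  have key : ∀ k, h k = hcol c (pref p k) ∧ P (pref p k) := by
    intro k
    induction k with
    | zero => exact ⟨h₀, hP₀⟩
    | succ k ih =>
      obtain ⟨m, hm, hPm⟩ := step k _ ih.1
      have hpk : p k = m := by simp [p, hm, hcol, ofNat_encode]
      rw [pref_succ, hpk]
      exact ⟨hm, hPm⟩
  exact ⟨p, fun k => (key k).2⟩

variable {a b : List ℕ → Bool} {f : ℤ × ℤ → WangTile}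

namespace Tiling

variable (hf : IsTiling (tileSet a b) Set.univ f)
include hf

lemma shape (q : ℤ × ℤ) : Shape (f q) := (hf.apply_mem q).1

lemma hpot_left (x y : ℤ) : hpot (tileLeft (f (x, y))) = hpot (tileLeft (f (0, y))) + x :=
  Int.eq_add_of_add_one (u := fun x => hpot (tileLeft (f (x, y))))
    (fun x => by rw [← hf.right_eq_left, (shape hf _).hpot_right]) x

lemma exists_isOrigin (y : ℤ) : ∃ x, IsOrigin (f (x, y)) :=
  ⟨-hpot (tileLeft (f (0, y))), by rw [IsOrigin, hpot_left hf]; ring⟩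

lemma isOrigin_unique {x x' y : ℤ} (h : IsOrigin (f (x, y))) (h' : IsOrigin (f (x', y))) :
    x = x' := by
  rw [IsOrigin, hpot_left hf] at h h'
  omega

lemma isOrigin_column {x y₀ : ℤ} (h : IsOrigin (f (x, y₀))) (y : ℤ) : IsOrigin (f (x, y)) :=
  Int.forall_of_iff_add_one (P := fun y => IsOrigin (f (x, y))) (fun y => by
    rw [(shape hf _).isOrigin_iff_up, (shape hf _).isOrigin_iff_bottom, hf.up_eq_bottom]) h y

lemma exists_path {x y : ℤ} (h : IsOrigin (f (x, y))) : ∃ p : ℕ → ℕ, ∀ k, a (pref p k) = true := by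
  have hr := (shape hf _).right_of_isOrigin h
  refine exists_pref_of_chain (P := fun σ => a σ = true)
    (h := fun k : ℕ => tileRight (f (x + k, y))) (by simpa using hr)
    ((hf.apply_mem _).2.1 _ hr) fun k σ hk => ?_
  rw [hf.right_eq_left] at hk
  obtain ⟨m, hm⟩ := (shape hf _).exists_right_of_left_path hk
  refine ⟨m, ?_, (hf.apply_mem _).2.1 _ hm⟩
  simpa [add_assoc] using hm

lemma exists_witness {x y : ℤ} (h : tileLeft (f (x, y)) = hcol 1 []) :
    ∃ g : ℕ → ℕ, ∀ k, b (pref g k) = false := by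
  refine exists_pref_of_chain (P := fun σ => b σ = false)
    (h := fun k : ℕ => tileLeft (f (x - k, y))) (by simpa using h)
    ((hf.apply_mem _).2.2 _ h) fun k σ hk => ?_
  have e : x - k = x - (k + 1 : ℕ) + 1 := by push_cast; ring
  rw [e, ← hf.right_eq_left] at hk
  obtain ⟨m, hm⟩ := (shape hf _).exists_left_of_right_witness hk
  exact ⟨m, hm, (hf.apply_mem _).2.2 _ hm⟩

/-- A period must be vertical, since the origin column is unique; along the origin column the
counter increases at every normal origin, so some origin is a reset tile. -/
lemma exists_witness_of_isPeriodic (hp : IsPeriodic f) :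
    ∃ g : ℕ → ℕ, ∀ k, b (pref g k) = false := by
  obtain ⟨⟨v₁, v₂⟩, hv, hper⟩ := hp
  obtain ⟨x, hx⟩ := exists_isOrigin hf 0
  have hcolumn := isOrigin_column hf hx
  have hv₁ : v₁ = 0 := by
    have h := hper (x, 0)
    simp only [Prod.mk_add_mk, zero_add] at h
    have := isOrigin_unique hf (hcolumn v₂) (x' := x + v₁) (by rw [IsOrigin, h]; exact hx)
    omega
  subst hv₁
  have hv₂ : v₂ ≠ 0 := by rintro rfl; exact hv rfl
  suffices ∃ y, tileLeft (f (x, y)) = hcol 1 [] from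
    let ⟨_, hy⟩ := this; exists_witness hf hy
  by_contra! hreset
  have hrank := Int.eq_add_of_add_one (u := fun y => vrank (tileBottom (f (x, y))))
    (fun y => by
      rw [← hf.up_eq_bottom]
      exact ((shape hf _).normal_or_reset_of_isOrigin (hcolumn y)).resolve_right
        (hreset y)) v₂
  have h := hper (x, 0)
  simp only [Prod.mk_add_mk, add_zero, zero_add] at h hrank
  rw [h] at hrank
  omega

end Tiling

def row (c : ℕ) (g p : ℕ → ℕ) (o : WangTile) : ℤ → WangTile
  | Int.negSucc k => (hcol c (pref g (k + 1)), vcol none, hcol c (pref g k), vcol none)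
  | Int.ofNat 0 => o
  | Int.ofNat (k + 1) => (hcol 2 (pref p k), vcol none, hcol 2 (pref p (k + 1)), vcol none)

lemma isTiling_row {c : ℕ} {g p : ℕ → ℕ} {o : ℤ → WangTile} (hc : c ≤ 1)
    (hg : c = 1 → ∀ k, b (pref g k) = false) (hp : ∀ k, a (pref p k) = true)
    (ho : ∀ y, o y ∈ tileSet a b) (hol : ∀ y, tileLeft (o y) = hcol c [])
    (hor : ∀ y, tileRight (o y) = hcol 2 []) (hov : ∀ y, tileUp (o y) = tileBottom (o (y + 1))) :
    IsTiling (tileSet a b) Set.univ fun q => row c g p (o q.2) q.1 := by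
  refine ⟨?_, ?_, ?_⟩
  · rintro ⟨(_ | k) | k, y⟩ -
    · exact ho y
    · refine ⟨by simpa [row, pref_succ] using Shape.path (pref p k) (p k), ?_, ?_⟩ <;>
        simp_all [row, tileLeft, tileRight]
    · refine ⟨by simpa [row, pref_succ] using Shape.arm c hc (pref g k) (g k),
        fun σ h => ?_, fun σ h => ?_⟩
      · simp only [row, tileRight, hcol_inj] at h
        omega
      · simp only [row, tileLeft, hcol_inj] at h
        exact h.2 ▸ hg h.1 _
  · rintro ((_ | k) | k) y - -
    · simpa [row, tileLeft, pref] using hor y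
    · rfl
    · rcases k with _ | k
      · simpa [row, tileRight, pref] using (hol y).symm
      · have e : Int.negSucc (k + 1) + 1 = Int.negSucc k := by omega
        simp [row, tileLeft, tileRight, e]
  · rintro ((_ | k) | k) y - -
    · exact hov y
    all_goals simp [row, tileUp, tileBottom]

theorem exists_isTiling_tileSet_iff :
    (∃ f, IsTiling (tileSet a b) Set.univ f) ↔ ∃ p : ℕ → ℕ, ∀ k, a (pref p k) = true := by
  constructor
  · rintro ⟨f, hf⟩
    obtain ⟨x, hx⟩ := Tiling.exists_isOrigin hf 0
    exact Tiling.exists_path hf hx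
  · rintro ⟨p, hp⟩
    let counter (y : ℤ) : ℕ × ℕ := (y.toNat, (-y).toNat)
    refine ⟨_, isTiling_row (c := 0) (g := p) (o := fun y =>
      (hcol 0 [], vcol (some (counter (y + 1))), hcol 2 [], vcol (some (counter y))))
      zero_le_one (by simp) hp (fun y => ⟨Shape.origin _ _ (by simp [counter]; omega), ?_⟩)
      (fun _ => rfl) (fun _ => rfl) (fun _ => rfl)⟩
    simpa [tileLeft, tileRight, pref] using hp 0

theorem exists_isTiling_isPeriodic_tileSet_iff :
    (∃ f, IsTiling (tileSet a b) Set.univ f ∧ IsPeriodic f) ↔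
      (∃ p : ℕ → ℕ, ∀ k, a (pref p k) = true) ∧ ∃ g : ℕ → ℕ, ∀ k, b (pref g k) = false := by
  constructor
  · rintro ⟨f, hf, hper⟩
    exact ⟨exists_isTiling_tileSet_iff.1 ⟨f, hf⟩,
      Tiling.exists_witness_of_isPeriodic hf hper⟩
  · rintro ⟨⟨p, hp⟩, ⟨g, hg⟩⟩
    let reset : WangTile := (hcol 1 [], vcol (some (0, 0)), hcol 2 [], vcol (some (0, 0)))
    refine ⟨_, isTiling_row (c := 1) (o := fun _ => reset) le_rfl (fun _ => hg) hp
      (fun _ => ⟨Shape.reset _ _, ?_⟩) (fun _ => rfl) (fun _ => rfl) (fun _ => rfl),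
      ⟨(0, 1), by simp, fun _ => by simp⟩⟩
    simpa [reset, tileLeft, tileRight, pref] using ⟨hp 0, hg 0⟩

theorem tiles_aperiodically_iff :
    ((∃ f, IsTiling (tileSet a b) Set.univ f) ∧
        ∀ f, IsTiling (tileSet a b) Set.univ f → ¬IsPeriodic f) ↔
      (∃ p : ℕ → ℕ, ∀ k, a (pref p k) = true) ∧ ∀ g : ℕ → ℕ, ∃ k, b (pref g k) = true := by
  rw [exists_isTiling_tileSet_iff]
  refine and_congr_right fun hp => ⟨fun h g => ?_, fun h f hf hper => ?_⟩
  · by_contra! hg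
    obtain ⟨f, hf, hper⟩ := exists_isTiling_isPeriodic_tileSet_iff.2 ⟨hp, g, by simpa using hg⟩
    exact h f hf hper
  · obtain ⟨g, hg⟩ := (exists_isTiling_isPeriodic_tileSet_iff.1 ⟨f, hf, hper⟩).2
    obtain ⟨k, hk⟩ := h g
    simp [hg k] at hk

lemma exists_eq_hcol (n : ℕ) : ∃ c σ, n = hcol c σ :=
  ⟨_, _, (encode_ofNat (α := ℕ × List ℕ) n).symm⟩

lemma exists_eq_vcol (n : ℕ) : ∃ z, n = vcol z :=
  ⟨_, (encode_ofNat (α := Option (ℕ × ℕ)) n).symm⟩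

abbrev TileCode : Type := (ℕ × List ℕ) × Option (ℕ × ℕ) × (ℕ × List ℕ) × Option (ℕ × ℕ)

def decodeTile (t : WangTile) : TileCode :=
  (ofNat _ (tileLeft t), ofNat _ (tileUp t), ofNat _ (tileRight t), ofNat _ (tileBottom t))

lemma primrec_decodeTile : Primrec decodeTile :=
  ((Primrec.ofNat _).comp Primrec.fst).pair (((Primrec.ofNat _).comp
    (Primrec.fst.comp Primrec.snd)).pair (((Primrec.ofNat _).comp
      (Primrec.fst.comp (Primrec.snd.comp Primrec.snd))).pair
        ((Primrec.ofNat _).comp (Primrec.snd.comp (Primrec.snd.comp Primrec.snd)))))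

/-- `Shape` in terms of decoded colours, in a form that is visibly primitive recursive. -/
def IsShapeCode : TileCode → Prop
  | (l, u, r, d) =>
    (u = none ∧ d = none ∧ l.1 = 2 ∧ r = (2, l.2 ++ [r.2.reverse.headI])) ∨
    (u = none ∧ d = none ∧ r.1 ≤ 1 ∧ l = (r.1, r.2 ++ [l.2.reverse.headI])) ∨
    (l = (0, []) ∧ r = (2, []) ∧ u ≠ none ∧ d ≠ none ∧
      (u.getD (0, 0)).1 + (d.getD (0, 0)).2 = (d.getD (0, 0)).1 + (u.getD (0, 0)).2 + 1) ∨
    (l = (1, []) ∧ r = (2, []) ∧ u ≠ none ∧ d ≠ none)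

lemma primrecPred_isShapeCode : PrimrecPred IsShapeCode := by
  have hl : Primrec fun s : TileCode => s.1 := Primrec.fst
  have hu : Primrec fun s : TileCode => s.2.1 := Primrec.fst.comp Primrec.snd
  have hr : Primrec fun s : TileCode => s.2.2.1 := Primrec.fst.comp (Primrec.snd.comp Primrec.snd)
  have hd : Primrec fun s : TileCode => s.2.2.2 := Primrec.snd.comp (Primrec.snd.comp Primrec.snd)
  have extend {f g : TileCode → ℕ × List ℕ} (hf : Primrec f) (hg : Primrec g) :
      Primrec fun s => (f s).2 ++ [(g s).2.reverse.headI] :=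
    Primrec.list_concat.comp (Primrec.snd.comp hf)
      (Primrec.list_headI.comp (Primrec.list_reverse.comp (Primrec.snd.comp hg)))
  have isNone {f : TileCode → Option (ℕ × ℕ)} (hf : Primrec f) :
      PrimrecPred fun s => f s = none :=
    Primrec.eq.comp hf (Primrec.const none)
  have counter {f : TileCode → Option (ℕ × ℕ)} (hf : Primrec f) :
      Primrec fun s => (f s).getD (0, 0) :=
    Primrec.option_getD.comp hf (Primrec.const _)
  refine PrimrecPred.of_eq (PrimrecPred.or ?_ (PrimrecPred.or ?_ (PrimrecPred.or ?_ ?_)))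
    fun s => Iff.rfl
  · exact (isNone hu).and ((isNone hd).and ((Primrec.eq.comp (Primrec.fst.comp hl)
      (Primrec.const 2)).and (Primrec.eq.comp hr ((Primrec.const 2).pair (extend hl hr)))))
  · exact (isNone hu).and ((isNone hd).and ((Primrec.nat_le.comp (Primrec.fst.comp hr)
      (Primrec.const 1)).and (Primrec.eq.comp hl ((Primrec.fst.comp hr).pair (extend hr hl)))))
  · exact (Primrec.eq.comp hl (Primrec.const _)).and ((Primrec.eq.comp hr (Primrec.const _)).and
      ((isNone hu).not.and ((isNone hd).not.and (Primrec.eq.comp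
        (Primrec.nat_add.comp (Primrec.fst.comp (counter hu)) (Primrec.snd.comp (counter hd)))
        (Primrec.nat_add.comp (Primrec.nat_add.comp (Primrec.fst.comp (counter hd))
          (Primrec.snd.comp (counter hu))) (Primrec.const 1))))))
  · exact (Primrec.eq.comp hl (Primrec.const _)).and ((Primrec.eq.comp hr (Primrec.const _)).and
      ((isNone hu).not.and (isNone hd).not))

lemma shape_iff_isShapeCode (t : WangTile) : Shape t ↔ IsShapeCode (decodeTile t) := by
  constructor
  · rintro (_ | _ | _ | _) <;>
      simp only [decodeTile, tileLeft, tileUp, tileRight, tileBottom, hcol, vcol, ofNat_encode] <;>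
      simp_all [IsShapeCode]
  · obtain ⟨l, u, r, d⟩ := t
    obtain ⟨c, σ, rfl⟩ := exists_eq_hcol l
    obtain ⟨c', τ, rfl⟩ := exists_eq_hcol r
    obtain ⟨z, rfl⟩ := exists_eq_vcol u
    obtain ⟨z', rfl⟩ := exists_eq_vcol d
    simp only [IsShapeCode, decodeTile, tileLeft, tileUp, tileRight, tileBottom, hcol, vcol,
      ofNat_encode, Prod.mk.injEq, ne_eq, Option.ne_none_iff_exists']
    rintro (⟨rfl, rfl, rfl, rfl, h⟩ | ⟨rfl, rfl, hc, rfl, h⟩ |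
      ⟨⟨rfl, rfl⟩, ⟨rfl, rfl⟩, ⟨q, rfl⟩, ⟨p, rfl⟩, h⟩ | ⟨⟨rfl, rfl⟩, ⟨rfl, rfl⟩, ⟨q, rfl⟩, ⟨p, rfl⟩⟩)
    · rw [h]
      exact Shape.path _ _
    · rw [h]
      exact Shape.arm _ hc _ _
    · exact Shape.origin _ _ h
    · exact Shape.reset _ _

lemma forall_hcol_imp_iff {n c : ℕ} {P : List ℕ → Prop} :
    (∀ σ, n = hcol c σ → P σ) ↔ ((ofNat (ℕ × List ℕ) n).1 = c → P (ofNat (ℕ × List ℕ) n).2) := by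
  obtain ⟨c', σ', rfl⟩ := exists_eq_hcol n
  simp only [hcol, ofNat_encode, encode_inj, Prod.mk.injEq]
  grind

lemma mem_tileSet_iff (t : WangTile) :
    t ∈ tileSet a b ↔ IsShapeCode (decodeTile t) ∧
      ((ofNat (ℕ × List ℕ) (tileRight t)).1 = 2 → a (ofNat (ℕ × List ℕ) (tileRight t)).2 = true) ∧
      ((ofNat (ℕ × List ℕ) (tileLeft t)).1 = 1 → b (ofNat (ℕ × List ℕ) (tileLeft t)).2 = false) :=
  and_congr (shape_iff_isShapeCode t) (and_congr forall_hcol_imp_iff forall_hcol_imp_iff)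

lemma computablePred_mem_tileSet {A B : ℕ → List ℕ → Bool} (hA : Computable₂ A)
    (hB : Computable₂ B) : ComputablePred fun q : ℕ × WangTile => q.2 ∈ tileSet (A q.1) (B q.1) := by
  classical
  have hl : Primrec fun q : ℕ × WangTile => ofNat (ℕ × List ℕ) (tileLeft q.2) :=
    (Primrec.ofNat _).comp (Primrec.fst.comp Primrec.snd)
  have hr : Primrec fun q : ℕ × WangTile => ofNat (ℕ × List ℕ) (tileRight q.2) :=
    (Primrec.ofNat _).comp (Primrec.fst.comp (Primrec.snd.comp (Primrec.snd.comp Primrec.snd)))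
  have hshape : Primrec fun q : ℕ × WangTile => decide (IsShapeCode (decodeTile q.2)) :=
    (primrecPred_isShapeCode.comp (primrec_decodeTile.comp Primrec.snd)).decide
  have hpath : Computable fun q : ℕ × WangTile =>
      (!decide ((ofNat (ℕ × List ℕ) (tileRight q.2)).1 = 2) ||
        A q.1 (ofNat (ℕ × List ℕ) (tileRight q.2)).2) :=
    Primrec.or.to_comp.comp (Primrec.not.comp (Primrec.eq.comp (Primrec.fst.comp hr)
      (Primrec.const 2)).decide).to_comp (hA.comp Computable.fst (Primrec.snd.comp hr).to_comp)
  have hwitness : Computable fun q : ℕ × WangTile =>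
      (!decide ((ofNat (ℕ × List ℕ) (tileLeft q.2)).1 = 1) ||
        !B q.1 (ofNat (ℕ × List ℕ) (tileLeft q.2)).2) :=
    Primrec.or.to_comp.comp (Primrec.not.comp (Primrec.eq.comp (Primrec.fst.comp hl)
      (Primrec.const 1)).decide).to_comp
      (Primrec.not.to_comp.comp (hB.comp Computable.fst (Primrec.snd.comp hl).to_comp))
  refine ⟨inferInstance, (Primrec.and.to_comp.comp hshape.to_comp
    (Primrec.and.to_comp.comp hpath hwitness)).of_eq fun q => ?_⟩
  rw [Bool.eq_iff_iff]
  simp [mem_tileSet_iff, imp_iff_not_or]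

lemma exists_computable_index {P : ℕ × WangTile → Prop} (hP : ComputablePred P) :
    ∃ r : ℕ → ℕ, Computable r ∧ ∀ n, PhiTotalBool (r n) ∧ PhiTileSet (r n) = {t | P (n, t)} := by
  obtain ⟨_, hdec⟩ := hP
  have hG := Computable.cond (hdec.comp ((Primrec.fst.comp Primrec.unpair).pair
    ((Primrec.ofNat WangTile).comp (Primrec.snd.comp Primrec.unpair))).to_comp)
    (Computable.const 1) (Computable.const 0)
  obtain ⟨c, hc⟩ := Nat.Partrec.Code.exists_code.1 (Partrec.nat_iff.1 hG)
  refine ⟨fun n => encode (c.curry n), (Primrec.encode.comp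
    (Nat.Partrec.Code.primrec₂_curry.comp (Primrec.const c) Primrec.id)).to_comp, fun n => ⟨?_, ?_⟩⟩
  · intro m
    simp only [Phi, ofNat_encode, Nat.Partrec.Code.eval_curry, hc, PFun.coe_val, Part.mem_some_iff,
      Bool.cond_decide]
    split_ifs <;> simp
  · ext t
    simp only [PhiTileSet, Phi, ofNat_encode, Nat.Partrec.Code.eval_curry, hc, PFun.coe_val,
      Part.mem_some_iff, Bool.cond_decide, Set.mem_ofPred_eq]
    split_ifs with h <;> simp only [Nat.unpair_pair, ofNat_encode] at h <;> simpa

end ATileReduction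

open ATileReduction

/-- Every intersection of a `Σ¹₁` set with a `Π¹₁` set is many-one reducible to `ATile`. -/
theorem sigma11_inter_pi11_manyOneReducible_ATile (X A B : Set ℕ)
    (hX : X = A ∩ B) (hA : Sigma11 A) (hB : Pi11 B) :
    (· ∈ X) ≤₀ (· ∈ ATile) := by
  obtain ⟨RA, hRA, hA⟩ := hA
  obtain ⟨RB, hRB, hB⟩ := hB
  obtain ⟨r, hr, hrn⟩ := exists_computable_index
    (computablePred_mem_tileSet (A := fun n σ => RA (n, σ)) (B := fun n σ => RB (n, σ)) hRA hRB)
  refine ⟨r, hr, fun n => ?_⟩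
  obtain ⟨htotal, hset⟩ := hrn n
  have key := tiles_aperiodically_iff (a := fun σ => RA (n, σ)) (b := fun σ => RB (n, σ))
  rw [hX]
  refine ⟨fun ⟨hnA, hnB⟩ => ⟨htotal, ?_⟩, fun ⟨_, h⟩ => ?_⟩
  · rw [hset]
    exact key.2 ⟨(hA n).1 hnA, (hB n).1 hnB⟩
  · rw [hset] at h
    exact ⟨(hA n).2 (key.1 h).1, (hB n).2 (key.1 h).2⟩
end

section
/- For every n < 256 there exist a finite set S of Wang prototiles with at most 18 elements, an injection ι : Bool → S, and positive integers p, q such that: (i) for every configuration c : ℤ → Bool there exists an S-tiling f of the lower half-plane H with f(p·i, −q·k) = ι((R_n)^k(c)(i)) for all i ∈ ℤ and k ∈ ℕ; and (ii) for every S-tiling f of H such that f(p·i, 0) lies in the range of ι for all i ∈ ℤ, the configuration c : ℤ → Bool determined by ι(c(i)) = f(p·i, 0) satisfies f(p·i, −q·k) = ι((R_n)^k(c)(i)) for all i ∈ ℤ and k ∈ ℕ. -/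
/-- The local rule of the elementary cellular automaton `R_n`. -/
def ecaLocal (n : ℕ) (a b c : Bool) : Bool :=
  n.testBit (4 * a.toNat + 2 * b.toNat + c.toNat)

/-- The global rule of the elementary cellular automaton `R_n`. -/
def ecaGlobal (n : ℕ) (c : ℤ → Bool) : ℤ → Bool :=
  fun i => ecaLocal n (c (i - 1)) (c i) (c (i + 1))

/-- The lower half-plane `H`. -/
def lowerHalf : Set (ℤ × ℤ) := {p : ℤ × ℤ | p.2 ≤ 0}

def caGlobal (φ : Bool → Bool → Bool → Bool) (c : ℤ → Bool) : ℤ → Bool :=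
  fun i => φ (c (i - 1)) (c i) (c (i + 1))

theorem ecaGlobal_eq_caGlobal (n : ℕ) : ecaGlobal n = caGlobal (ecaLocal n) := rfl

section Tiles

variable (φ : Bool → Bool → Bool → Bool)

/- Colours: `0, 1` carry a new cell value up into a value row, `2, 3` carry a cell value down
into a rule row, `4 + 2 a + b` carries a pair of neighbouring values, `8` is blank. -/
def valueTile (b : Bool) : WangTile := (8, b.toNat, 8, 2 + b.toNat)

def ruleTile (a b c : Bool) : WangTile :=
  (4 + 2 * a.toNat + b.toNat, 2 + b.toNat, 4 + 2 * b.toNat + c.toNat, (φ a b c).toNat)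

def caTileSet : Finset WangTile :=
  Finset.univ.image valueTile ∪
    Finset.univ.image fun t : Bool × Bool × Bool => ruleTile φ t.1 t.2.1 t.2.2

theorem card_caTileSet_le : (caTileSet φ).card ≤ 10 :=
  calc (caTileSet φ).card
      ≤ Fintype.card Bool + Fintype.card (Bool × Bool × Bool) :=
        (Finset.card_union_le _ _).trans (add_le_add Finset.card_image_le Finset.card_image_le)
    _ = 10 := rfl

theorem valueTile_mem_caTileSet (b : Bool) : valueTile b ∈ caTileSet φ :=
  Finset.mem_union_left _ (Finset.mem_image_of_mem _ (Finset.mem_univ b))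

theorem ruleTile_mem_caTileSet (a b c : Bool) : ruleTile φ a b c ∈ caTileSet φ :=
  Finset.mem_union_right _ (Finset.mem_image_of_mem _ (Finset.mem_univ (a, b, c)))

theorem valueTile_injective : Function.Injective valueTile := by
  intro a b h
  cases a <;> cases b <;> simp_all [valueTile]

variable {φ}

theorem mem_caTileSet {t : WangTile} :
    t ∈ caTileSet φ ↔ (∃ b, valueTile b = t) ∨ ∃ a b c, ruleTile φ a b c = t := by
  simp only [caTileSet, Finset.mem_union, Finset.mem_image, Finset.mem_univ, true_and,
    Prod.exists]

theorem eq_valueTile_of_tileUp_eq {t : WangTile} {b : Bool} (ht : t ∈ caTileSet φ)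
    (hup : tileUp t = b.toNat) : t = valueTile b := by
  rcases mem_caTileSet.1 ht with ⟨b', rfl⟩ | ⟨a, b', c, rfl⟩
  · cases b <;> cases b' <;> simp_all [valueTile, tileUp]
  · have := b.toNat_le
    simp only [ruleTile, tileUp] at hup
    omega

theorem exists_eq_ruleTile_of_tileUp_eq {t : WangTile} {b : Bool} (ht : t ∈ caTileSet φ)
    (hup : tileUp t = 2 + b.toNat) : ∃ a c, t = ruleTile φ a b c := by
  rcases mem_caTileSet.1 ht with ⟨b', rfl⟩ | ⟨a, b', c, rfl⟩
  · have := b'.toNat_le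
    simp only [valueTile, tileUp] at hup
    omega
  · refine ⟨a, c, ?_⟩
    cases b <;> cases b' <;> simp_all [ruleTile, tileUp]

theorem ruleTile_matches {a b c a' b' c' : Bool}
    (h : tileRight (ruleTile φ a b c) = tileLeft (ruleTile φ a' b' c')) : b = a' ∧ c = b' := by
  cases b <;> cases c <;> cases a' <;> cases b' <;> simp_all [ruleTile, tileRight, tileLeft]

end Tiles

section Tilings

variable {S : Set WangTile} {f : ℤ × ℤ → WangTile} {y : ℤ}

theorem IsTiling.mem_of_le (hf : IsTiling S lowerHalf f) (hy : y ≤ 0) (x : ℤ) : f (x, y) ∈ S :=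
  hf.1 (x, y) hy

theorem IsTiling.right_eq_left_s19 (hf : IsTiling S lowerHalf f) (hy : y ≤ 0) (x : ℤ) :
    tileRight (f (x, y)) = tileLeft (f (x + 1, y)) :=
  hf.2.1 x y hy hy

theorem IsTiling.up_eq_bottom_s19 (hf : IsTiling S lowerHalf f) (hy : y ≤ 0) (x : ℤ) :
    tileUp (f (x, y - 1)) = tileBottom (f (x, y)) := by
  have := hf.2.2 x (y - 1) (show y - 1 ≤ 0 by omega) (show y - 1 + 1 ≤ 0 by omega)
  rwa [sub_add_cancel] at this

end Tilings

section Forcing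

variable {φ : Bool → Bool → Bool → Bool} {f : ℤ × ℤ → WangTile} {y : ℤ} {g : ℤ → Bool}

def IsValueRow (f : ℤ × ℤ → WangTile) (y : ℤ) (g : ℤ → Bool) : Prop :=
  ∀ i, f (i, y) = valueTile (g i)

def IsRuleRow (φ : Bool → Bool → Bool → Bool) (f : ℤ × ℤ → WangTile) (y : ℤ)
    (g : ℤ → Bool) : Prop :=
  ∀ i, f (i, y) = ruleTile φ (g (i - 1)) (g i) (g (i + 1))

theorem IsValueRow.isRuleRow_sub_one (hf : IsTiling (caTileSet φ) lowerHalf f) (hy : y ≤ 0)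
    (h : IsValueRow f y g) : IsRuleRow φ f (y - 1) g := by
  have hrule : ∀ i, ∃ a c, f (i, y - 1) = ruleTile φ a (g i) c := fun i =>
    exists_eq_ruleTile_of_tileUp_eq (hf.mem_of_le (by omega) i)
      (by rw [hf.up_eq_bottom_s19 hy, h]; rfl)
  intro i
  obtain ⟨a, c, hi⟩ := hrule i
  obtain ⟨_, _, hl⟩ := hrule (i - 1)
  obtain ⟨_, _, hr⟩ := hrule (i + 1)
  have hleft := hf.right_eq_left_s19 (y := y - 1) (by omega) (i - 1)
  rw [hl, sub_add_cancel, hi] at hleft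
  have hright := hf.right_eq_left_s19 (y := y - 1) (by omega) i
  rw [hi, hr] at hright
  rw [hi, ← (ruleTile_matches hleft).1, (ruleTile_matches hright).2]

theorem IsRuleRow.isValueRow_sub_one (hf : IsTiling (caTileSet φ) lowerHalf f) (hy : y ≤ 0)
    (h : IsRuleRow φ f y g) : IsValueRow f (y - 1) (caGlobal φ g) := fun i =>
  eq_valueTile_of_tileUp_eq (hf.mem_of_le (by omega) i) (by rw [hf.up_eq_bottom_s19 hy, h]; rfl)

theorem isValueRow_iterate (hf : IsTiling (caTileSet φ) lowerHalf f) {c : ℤ → Bool}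
    (h : IsValueRow f 0 c) (k : ℕ) : IsValueRow f (-(2 * k)) ((caGlobal φ)^[k] c) := by
  induction k with
  | zero => simpa using h
  | succ k ih =>
    rw [Function.iterate_succ_apply', show -(2 * ((k + 1 : ℕ) : ℤ)) = -(2 * k) - 1 - 1 by
      push_cast; ring]
    exact ((ih.isRuleRow_sub_one hf (by omega)).isValueRow_sub_one hf (by omega))

end Forcing

section Canonical

variable (φ : Bool → Bool → Bool → Bool) (c : ℤ → Bool)

def canonicalTiling (p : ℤ × ℤ) : WangTile :=
  let g := (caGlobal φ)^[(-p.2).toNat / 2] c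
  if p.2 % 2 = 0 then valueTile (g p.1) else ruleTile φ (g (p.1 - 1)) (g p.1) (g (p.1 + 1))

theorem canonicalTiling_even_row (i : ℤ) (k : ℕ) :
    canonicalTiling φ c (i, -(2 * k)) = valueTile ((caGlobal φ)^[k] c i) := by
  simp [canonicalTiling, show (2 * (k : ℤ)).toNat / 2 = k by omega]

theorem isTiling_canonicalTiling : IsTiling (caTileSet φ) lowerHalf (canonicalTiling φ c) := by
  refine ⟨fun p _ => ?_, fun x y _ _ => ?_, fun x y _ hy => ?_⟩
  · simp only [canonicalTiling]
    split_ifs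
    · exact valueTile_mem_caTileSet φ _
    · exact ruleTile_mem_caTileSet φ _ _ _
  · by_cases hpar : y % 2 = 0 <;>
      simp [canonicalTiling, hpar, valueTile, ruleTile, tileRight, tileLeft]
  · replace hy : y + 1 ≤ 0 := hy
    by_cases hpar : y % 2 = 0
    · have hk : (-y).toNat / 2 = (-(y + 1)).toNat / 2 + 1 := by omega
      simp only [canonicalTiling, hpar, hk, show ¬(y + 1) % 2 = 0 by omega, if_true, if_false]
      simp [Function.iterate_succ_apply', caGlobal, valueTile, ruleTile, tileUp, tileBottom]
    · have hk : (-y).toNat / 2 = (-(y + 1)).toNat / 2 := by omega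
      simp only [canonicalTiling, hpar, hk, show (y + 1) % 2 = 0 by omega, if_true, if_false]
      simp [valueTile, ruleTile, tileUp, tileBottom]

end Canonical

/-- Every elementary cellular automaton is encoded by a set of at most 18 Wang
prototiles tiling the lower half-plane. -/
theorem eca_encoded_by_18_wang_tiles :
    ∀ n : ℕ, n < 256 →
      ∃ S : Finset WangTile, S.card ≤ 18 ∧
        ∃ ι : Bool → WangTile, Function.Injective ι ∧ (∀ b : Bool, ι b ∈ S) ∧
          ∃ p q : ℕ, 0 < p ∧ 0 < q ∧
            (∀ c : ℤ → Bool, ∃ f : ℤ × ℤ → WangTile,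
              IsTiling (↑S) lowerHalf f ∧
              ∀ i : ℤ, ∀ k : ℕ,
                f ((p : ℤ) * i, -((q : ℤ) * (k : ℤ))) = ι ((ecaGlobal n)^[k] c i)) ∧
            (∀ f : ℤ × ℤ → WangTile, IsTiling (↑S) lowerHalf f →
              (∀ i : ℤ, ∃ b : Bool, f ((p : ℤ) * i, 0) = ι b) →
              ∀ c : ℤ → Bool, (∀ i : ℤ, f ((p : ℤ) * i, 0) = ι (c i)) →
                ∀ i : ℤ, ∀ k : ℕ,
                  f ((p : ℤ) * i, -((q : ℤ) * (k : ℤ))) = ι ((ecaGlobal n)^[k] c i)) := by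
  intro n _
  rw [ecaGlobal_eq_caGlobal]
  refine ⟨caTileSet (ecaLocal n), (card_caTileSet_le _).trans (by norm_num),
    valueTile, valueTile_injective, valueTile_mem_caTileSet _, 1, 2, one_pos, two_pos,
    fun c => ⟨canonicalTiling _ c, isTiling_canonicalTiling _ c, fun i k => ?_⟩,
    fun f hf _ c hc i k => ?_⟩
  · simpa using canonicalTiling_even_row _ c i k
  · simpa using isValueRow_iterate hf (fun i => by simpa using hc i) k i
end
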